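/- Let X be a real Banach space with dim X ≥ 2. Then Ω′(X) ≤ (2/5)·C_NJ(X) + 4/5, where C_NJ(X) is the von Neumann–Jordan constant of X. -/
import Mathlib


/-- The generalized orthogonal geometric constant
`Ω′(X) = sup{ (‖x+2y‖² + ‖2x+y‖²)/(5‖x+y‖²) : x, y ∈ X, (x,y) ≠ (0,0), x ⊥_I y }`. -/
noncomputable def OmegaPrime (X : Type*) [NormedAddCommGroup X] [NormedSpace ℝ X] : ℝ :=
  sSup { r : ℝ | ∃ x y : X, (x, y) ≠ (0, 0) ∧ ‖x + y‖ = ‖x - y‖ ∧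
    r = (‖x + (2 : ℝ) • y‖ ^ 2 + ‖(2 : ℝ) • x + y‖ ^ 2) / (5 * ‖x + y‖ ^ 2) }

/-- The von Neumann–Jordan constant
`C_NJ(X) = sup{ (‖x+y‖² + ‖x−y‖²)/(2(‖x‖² + ‖y‖²)) : (x,y) ≠ (0,0) }`. -/
noncomputable def vonNeumannJordanConst (X : Type*)
    [NormedAddCommGroup X] [NormedSpace ℝ X] : ℝ :=
  sSup { r : ℝ | ∃ x y : X, (x, y) ≠ (0, 0) ∧
    r = (‖x + y‖ ^ 2 + ‖x - y‖ ^ 2) / (2 * (‖x‖ ^ 2 + ‖y‖ ^ 2)) }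

lemma njSet_bddAbove (X : Type*) [NormedAddCommGroup X] [NormedSpace ℝ X] :
    BddAbove { r : ℝ | ∃ x y : X, (x, y) ≠ (0, 0) ∧
      r = (‖x + y‖ ^ 2 + ‖x - y‖ ^ 2) / (2 * (‖x‖ ^ 2 + ‖y‖ ^ 2)) } := by
  refine ⟨2, ?_⟩
  rintro r ⟨x, y, hxy, rfl⟩
  have hx0 : ¬ (x = 0 ∧ y = 0) := by
    intro ⟨h1, h2⟩; exact hxy (by simp [h1, h2])
  have hden : 0 < ‖x‖ ^ 2 + ‖y‖ ^ 2 := by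
    rcases not_and_or.mp hx0 with h | h
    · have := norm_pos_iff.mpr h
      positivity
    · have := norm_pos_iff.mpr h
      positivity
  have h1 : ‖x + y‖ ≤ ‖x‖ + ‖y‖ := norm_add_le x y
  have h2 : ‖x - y‖ ≤ ‖x‖ + ‖y‖ := norm_sub_le x y
  rw [div_le_iff₀ (by linarith)]
  nlinarith [norm_nonneg (x + y), norm_nonneg (x - y), sq_nonneg (‖x‖ - ‖y‖)]

lemma njConst_nonneg (X : Type*) [NormedAddCommGroup X] [NormedSpace ℝ X] :
    0 ≤ vonNeumannJordanConst X := by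
  apply Real.sSup_nonneg
  rintro r ⟨x, y, hxy, rfl⟩
  positivity

/-- For a real Banach space `X` with `dim X ≥ 2`,
`Ω′(X) ≤ (2/5)·C_NJ(X) + 4/5`. -/
theorem omegaPrime_le_vonNeumannJordan
    {X : Type*} [NormedAddCommGroup X] [NormedSpace ℝ X] [CompleteSpace X]
    (hdim : 2 ≤ Module.rank ℝ X) :
    OmegaPrime X ≤ (2 / 5) * vonNeumannJordanConst X + 4 / 5 := by
  set C := vonNeumannJordanConst X with hC
  have hC0 : 0 ≤ C := njConst_nonneg X
  have hRHS : 0 ≤ (2 / 5) * C + 4 / 5 := by linarith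
  apply Real.sSup_le _ hRHS
  rintro r ⟨x, y, hxy, hI, rfl⟩
  by_cases hu : ‖x + y‖ = 0
  · rw [hu]
    simpa using hRHS
  have hupos : 0 < ‖x + y‖ := lt_of_le_of_ne (norm_nonneg _) (Ne.symm hu)
  -- key: ‖x‖² + ‖y‖² ≤ C ‖x+y‖², from NJ member with (x+y, x-y)
  have hmem : (‖(x + y) + (x - y)‖ ^ 2 + ‖(x + y) - (x - y)‖ ^ 2) /
      (2 * (‖x + y‖ ^ 2 + ‖x - y‖ ^ 2)) ≤ C := by
    apply le_csSup (njSet_bddAbove X)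
    exact ⟨x + y, x - y, by
      simp only [ne_eq, Prod.mk.injEq, not_and]
      intro h
      exact absurd (by rw [h]; simp) hu, rfl⟩
  have e1 : ‖(x + y) + (x - y)‖ = 2 * ‖x‖ := by
    rw [show (x + y) + (x - y) = (2 : ℝ) • x by module, norm_smul]
    simp
  have e2 : ‖(x + y) - (x - y)‖ = 2 * ‖y‖ := by
    rw [show (x + y) - (x - y) = (2 : ℝ) • y by module, norm_smul]
    simp
  rw [e1, e2, ← hI] at hmem
  have hS : ‖x‖ ^ 2 + ‖y‖ ^ 2 ≤ C * ‖x + y‖ ^ 2 := by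
    have hd : 0 < 2 * (‖x + y‖ ^ 2 + ‖x + y‖ ^ 2) := by positivity
    rw [div_le_iff₀ hd] at hmem
    nlinarith
  -- triangle bounds
  have t1 : ‖x + (2 : ℝ) • y‖ ≤ ‖x + y‖ + ‖y‖ := by
    calc ‖x + (2 : ℝ) • y‖ = ‖(x + y) + y‖ := by rw [show x + (2 : ℝ) • y = (x + y) + y by module]
    _ ≤ ‖x + y‖ + ‖y‖ := norm_add_le _ _
  have t2 : ‖(2 : ℝ) • x + y‖ ≤ ‖x + y‖ + ‖x‖ := by
    calc ‖(2 : ℝ) • x + y‖ = ‖(x + y) + x‖ := by rw [show (2 : ℝ) • x + y = (x + y) + x by module]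
    _ ≤ ‖x + y‖ + ‖x‖ := norm_add_le _ _
  rw [div_le_iff₀ (by positivity)]
  have hn1 : (0:ℝ) ≤ ‖x + (2 : ℝ) • y‖ := norm_nonneg _
  have hn2 : (0:ℝ) ≤ ‖(2 : ℝ) • x + y‖ := norm_nonneg _
  nlinarith [sq_nonneg (‖x + y‖ - ‖x‖), sq_nonneg (‖x + y‖ - ‖y‖), norm_nonneg x, norm_nonneg y]
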